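/- The metric dimension of the barycentric subdivision of the zero divisor graph of Z_77 equals 10, i.e. dim(BS(Γ(Z_{77}))) = 10. -/

import Mathlib

open SimpleGraph

/-- The nonzero zero-divisors of `ZMod n`. -/
def ZDVert (n : ℕ) : Type :=
  {a : ZMod n // a ≠ 0 ∧ ∃ b : ZMod n, b ≠ 0 ∧ a * b = 0}

/-- The zero-divisor graph of `ZMod n`: vertices are the nonzero zero-divisors,
with distinct vertices adjacent iff their product is zero. -/
def zdGraph (n : ℕ) : SimpleGraph (ZDVert n) where
  Adj a b := a ≠ b ∧ a.1 * b.1 = 0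
  symm := by
    constructor
    rintro a b ⟨hab, h⟩
    exact ⟨hab.symm, by rwa [mul_comm] at h⟩
  loopless := by
    constructor
    rintro a ⟨hne, -⟩
    exact hne rfl

/-- The barycentric subdivision of a simple graph: vertices are the disjoint union
of the original vertices and the edges, an original vertex is adjacent to an
edge-vertex iff it is an endpoint of that edge, and there are no other adjacencies. -/
def BS {V : Type*} (G : SimpleGraph V) : SimpleGraph (V ⊕ G.edgeSet) where
  Adj x y :=
    (∃ (v : V) (e : G.edgeSet), x = Sum.inl v ∧ y = Sum.inr e ∧ v ∈ e.1) ∨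
    (∃ (v : V) (e : G.edgeSet), x = Sum.inr e ∧ y = Sum.inl v ∧ v ∈ e.1)
  symm := by
    constructor
    rintro x y (⟨v, e, rfl, rfl, h⟩ | ⟨v, e, rfl, rfl, h⟩)
    · exact Or.inr ⟨v, e, rfl, rfl, h⟩
    · exact Or.inl ⟨v, e, rfl, rfl, h⟩
  loopless := by
    constructor
    rintro x (⟨v, e, rfl, h, -⟩ | ⟨v, e, rfl, h, -⟩) <;> simp at h

/-- A set of vertices is resolving if any two distinct vertices are distinguished
by their distance to some vertex of the set. -/
def IsResolving {V : Type*} (G : SimpleGraph V) (W : Set V) : Prop :=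
  ∀ x y : V, x ≠ y → ∃ w ∈ W, G.dist x w ≠ G.dist y w

/-- The metric dimension: the least cardinality of a (finite) resolving set. -/
noncomputable def metricDim {V : Type*} (G : SimpleGraph V) : ℕ :=
  sInf {k | ∃ W : Finset V, IsResolving G ↑W ∧ W.card = k}

/-- The independent metric dimension: the least cardinality of a (finite)
resolving set that is also an independent set. -/
noncomputable def indepMetricDim {V : Type*} (G : SimpleGraph V) : ℕ :=
  sInf {k | ∃ W : Finset V, IsResolving G ↑W ∧
    (∀ a ∈ W, ∀ b ∈ W, ¬ G.Adj a b) ∧ W.card = k}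

namespace ZD77
instance (n : ℕ) : DecidableEq (ZDVert n) :=
  inferInstanceAs (DecidableEq {a : ZMod n // a ≠ 0 ∧ ∃ b : ZMod n, b ≠ 0 ∧ a * b = 0})
instance (n : ℕ) [NeZero n] : Fintype (ZDVert n) :=
  inferInstanceAs (Fintype {a : ZMod n // a ≠ 0 ∧ ∃ b : ZMod n, b ≠ 0 ∧ a * b = 0})
instance (n : ℕ) : DecidableRel (zdGraph n).Adj := fun a b =>
  inferInstanceAs (Decidable (a ≠ b ∧ a.1 * b.1 = 0))

abbrev V77 := ZDVert 77
abbrev G77 := zdGraph 77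

/-- side predicate : `P x` iff `x` is a multiple of 7. -/
def P (x : V77) : Prop := 7 ∣ x.1.val
instance : DecidablePred P := fun x => Nat.decidable_dvd _ _

set_option maxRecDepth 10000 in
lemma adj_iff : ∀ x y : V77, G77.Adj x y ↔ x ≠ y ∧ ¬ (P x ↔ P y) := by decide

set_option maxRecDepth 10000 in
lemma exists_opp : ∀ x : V77, ∃ y : V77, ¬ (P x ↔ P y) := by decide

lemma ne_of_opp {x y : V77} (h : ¬ (P x ↔ P y)) : x ≠ y := by
  rintro rfl; exact h Iff.rfl

lemma adj_of_opp {x y : V77} (h : ¬ (P x ↔ P y)) : G77.Adj x y :=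
  (adj_iff x y).2 ⟨ne_of_opp h, h⟩

lemma same_of_not_adj {x y : V77} (h : ¬ G77.Adj x y) : P x ↔ P y := by
  by_contra hc; exact h (adj_of_opp hc)

/-- Every edge in the edge set comes from an adjacent pair. -/
lemma edge_decomp (e : G77.edgeSet) : ∃ a b : V77, G77.Adj a b ∧ e.1 = s(a, b) := by
  obtain ⟨s, hs⟩ := e
  induction s with
  | _ a b => exact ⟨a, b, hs, rfl⟩

lemma mem_sym2 {a b v : V77} : v ∈ (s(a,b) : Sym2 V77) ↔ v = a ∨ v = b := Sym2.mem_iff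

/-- two distinct same-side vertices lie in no common edge -/
lemma not_mem_same_side {u v : V77} (hne : u ≠ v) (hs : P u ↔ P v)
    (e : G77.edgeSet) : ¬ (u ∈ e.1 ∧ v ∈ e.1) := by
  rintro ⟨hu, hv⟩
  have he : e.1 = s(u, v) := (Sym2.mem_and_mem_iff hne).mp ⟨hu, hv⟩
  have : G77.Adj u v := by rw [← SimpleGraph.mem_edgeSet, ← he]; exact e.2
  exact ((adj_iff u v).1 this).2 hs

abbrev H := BS G77

lemma bs_adj_inl_inr (v : V77) (e : G77.edgeSet) :
    H.Adj (Sum.inl v) (Sum.inr e) ↔ v ∈ e.1 := by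
  constructor
  · rintro (⟨v', e', hv, he, h⟩ | ⟨v', e', h', -⟩)
    · cases hv; cases he; exact h
    · exact absurd h' (by simp)
  · intro h; exact Or.inl ⟨v, e, rfl, rfl, h⟩

lemma bs_adj_inr_inl (v : V77) (e : G77.edgeSet) :
    H.Adj (Sum.inr e) (Sum.inl v) ↔ v ∈ e.1 := by
  rw [SimpleGraph.adj_comm]; exact bs_adj_inl_inr v e

lemma bs_not_adj_inl_inl (u v : V77) : ¬ H.Adj (Sum.inl u) (Sum.inl v) := by
  rintro (⟨v', e', -, he, -⟩ | ⟨v', e', he, -, -⟩) <;> exact absurd he (by simp)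

lemma bs_not_adj_inr_inr (e f : G77.edgeSet) : ¬ H.Adj (Sum.inr e) (Sum.inr f) := by
  rintro (⟨v', e', he, -, -⟩ | ⟨v', e', -, he, -⟩) <;> exact absurd he (by simp)

lemma bs_adj_isLeft {x y : V77 ⊕ G77.edgeSet} (h : H.Adj x y) :
    x.isLeft = !y.isLeft := by
  rcases h with ⟨v, e, rfl, rfl, -⟩ | ⟨v, e, rfl, rfl, -⟩ <;> rfl

lemma walk_parity {x y : V77 ⊕ G77.edgeSet} (w : H.Walk x y) :
    (x.isLeft = y.isLeft) ↔ Even w.length := by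
  induction w with
  | nil => simp
  | cons h p ih =>
    rw [SimpleGraph.Walk.length_cons, Nat.even_add_one, ← ih, bs_adj_isLeft h]
    cases (_ : V77 ⊕ G77.edgeSet).isLeft <;> cases (_ : V77 ⊕ G77.edgeSet).isLeft <;> simp

end ZD77

namespace ZD77
open Sum SimpleGraph

lemma dist_ne_zero_of {x y : V77 ⊕ G77.edgeSet} (hne : x ≠ y) (w : H.Walk x y) :
    H.dist x y ≠ 0 := by
  intro h0
  rcases SimpleGraph.dist_eq_zero_iff_eq_or_not_reachable.mp h0 with h | h
  · exact hne h
  · exact h ⟨w⟩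

lemma dist_parity {x y : V77 ⊕ G77.edgeSet} (h0 : H.dist x y ≠ 0) :
    (x.isLeft = y.isLeft) ↔ Even (H.dist x y) := by
  obtain ⟨p, hp⟩ := SimpleGraph.exists_walk_of_dist_ne_zero h0
  rw [← hp]; exact walk_parity p

lemma dist_ne_two {x y : V77 ⊕ G77.edgeSet}
    (h : ∀ z, ¬ (H.Adj x z ∧ H.Adj z y)) (h0 : H.dist x y ≠ 0) : H.dist x y ≠ 2 := by
  intro h2
  obtain ⟨p, hp⟩ := SimpleGraph.exists_walk_of_dist_ne_zero h0
  rw [h2] at hp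
  cases p with
  | nil => simp at hp
  | cons ha q =>
    cases q with
    | nil => simp at hp
    | cons hb r =>
      cases r with
      | nil => exact h _ ⟨ha, hb⟩
      | cons hc s => simp only [SimpleGraph.Walk.length_cons] at hp; omega

/-- distance between two original vertices -/
lemma dist_inl_inl (u v : V77) : H.dist (Sum.inl u) (Sum.inl v)
    = if u = v then 0 else if G77.Adj u v then 2 else 4 := by
  rcases eq_or_ne u v with rfl | hne
  · simp [SimpleGraph.dist_self]
  rw [if_neg hne]
  have hnoz : ∀ z, ¬ (H.Adj (Sum.inl u) z ∧ H.Adj z (Sum.inl v)) → True := fun _ _ => trivial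
  by_cases hadj : G77.Adj u v
  · rw [if_pos hadj]
    have he : s(u,v) ∈ G77.edgeSet := hadj
    set e : G77.edgeSet := ⟨s(u,v), he⟩
    let w : H.Walk (Sum.inl u) (Sum.inl v) :=
      .cons ((bs_adj_inl_inr u e).mpr (by simp [e])) (.cons ((bs_adj_inr_inl v e).mpr (by simp [e])) .nil)
    have h0 := dist_ne_zero_of (by simp [hne]) w
    have h1 : H.dist (Sum.inl u) (Sum.inl v) ≠ 1 := by
      rw [Ne, SimpleGraph.dist_eq_one_iff_adj]; exact bs_not_adj_inl_inl u v
    have hle := SimpleGraph.dist_le w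
    have hlen : w.length = 2 := by rfl
    omega
  · rw [if_neg hadj]
    have hside : P u ↔ P v := same_of_not_adj hadj
    obtain ⟨z, hz⟩ := exists_opp u
    have hz' : ¬ (P v ↔ P z) := by tauto
    have h1 : G77.Adj u z := adj_of_opp hz
    have h2 : G77.Adj v z := adj_of_opp hz'
    set e1 : G77.edgeSet := ⟨s(u,z), h1⟩
    set e2 : G77.edgeSet := ⟨s(v,z), h2⟩
    let w : H.Walk (Sum.inl u) (Sum.inl v) :=
      .cons ((bs_adj_inl_inr u e1).mpr (by simp [e1]))
        (.cons ((bs_adj_inr_inl z e1).mpr (by simp [e1]))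
          (.cons ((bs_adj_inl_inr z e2).mpr (by simp [e2]))
            (.cons ((bs_adj_inr_inl v e2).mpr (by simp [e2])) .nil)))
    have h0 := dist_ne_zero_of (by simp [hne]) w
    have h1' : H.dist (Sum.inl u) (Sum.inl v) ≠ 1 := by
      rw [Ne, SimpleGraph.dist_eq_one_iff_adj]; exact bs_not_adj_inl_inl u v
    have h2' : H.dist (Sum.inl u) (Sum.inl v) ≠ 2 := by
      refine dist_ne_two (fun z hz => ?_) h0
      rcases z with z | f
      · exact bs_not_adj_inl_inl u z hz.1
      · have hu : u ∈ f.1 := (bs_adj_inl_inr u f).mp hz.1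
        have hv : v ∈ f.1 := (bs_adj_inr_inl v f).mp hz.2
        exact not_mem_same_side hne hside f ⟨hu, hv⟩
    have heven : Even (H.dist (Sum.inl u) (Sum.inl v)) := (dist_parity h0).mp rfl
    have hle := SimpleGraph.dist_le w
    have hlen : w.length = 4 := by rfl
    rcases heven with ⟨k, hk⟩
    omega

/-- distance from an original vertex to an edge vertex -/
lemma dist_inl_inr (v : V77) (e : G77.edgeSet) : H.dist (Sum.inl v) (Sum.inr e)
    = if v ∈ e.1 then 1 else 3 := by
  by_cases hm : v ∈ e.1
  · rw [if_pos hm, SimpleGraph.dist_eq_one_iff_adj]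
    exact (bs_adj_inl_inr v e).mpr hm
  · rw [if_neg hm]
    obtain ⟨a, b, hab, habe⟩ := edge_decomp e
    have hops : ¬ (P a ↔ P b) := ((adj_iff a b).1 hab).2
    -- pick the endpoint of e opposite to v
    obtain ⟨u, hue, huv⟩ : ∃ u : V77, u ∈ e.1 ∧ ¬ (P v ↔ P u) := by
      by_cases hva : P v ↔ P a
      · exact ⟨b, by simp [habe], by tauto⟩
      · exact ⟨a, by simp [habe], hva⟩
    have hadj : G77.Adj v u := adj_of_opp huv
    set e1 : G77.edgeSet := ⟨s(v,u), hadj⟩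
    let w : H.Walk (Sum.inl v) (Sum.inr e) :=
      .cons ((bs_adj_inl_inr v e1).mpr (by simp [e1]))
        (.cons ((bs_adj_inr_inl u e1).mpr (by simp [e1]))
          (.cons ((bs_adj_inl_inr u e).mpr hue) .nil))
    have h0 := dist_ne_zero_of (by simp) w
    have h1 : H.dist (Sum.inl v) (Sum.inr e) ≠ 1 := fun h =>
      hm ((bs_adj_inl_inr v e).mp (SimpleGraph.dist_eq_one_iff_adj.mp h))
    have hodd : ¬ Even (H.dist (Sum.inl v) (Sum.inr e)) := by
      intro hev
      have := (dist_parity h0).mpr hev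
      simp at this
    have hle := SimpleGraph.dist_le w
    have hlen : w.length = 3 := by rfl
    rcases Nat.even_or_odd (H.dist (Sum.inl v) (Sum.inr e)) with h | ⟨k, hk⟩
    · exact absurd h hodd
    · omega

lemma dist_inr_inl (v : V77) (e : G77.edgeSet) : H.dist (Sum.inr e) (Sum.inl v)
    = if v ∈ e.1 then 1 else 3 := by
  rw [SimpleGraph.dist_comm]; exact dist_inl_inr v e

/-- distance between two edge vertices -/
lemma dist_inr_inr (e f : G77.edgeSet) : H.dist (Sum.inr e) (Sum.inr f)
    = if e = f then 0 else if ∃ v, v ∈ e.1 ∧ v ∈ f.1 then 2 else 4 := by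
  rcases eq_or_ne e f with rfl | hne
  · simp [SimpleGraph.dist_self]
  rw [if_neg hne]
  have hne' : (Sum.inr e : V77 ⊕ G77.edgeSet) ≠ Sum.inr f := by simp [hne]
  by_cases hcom : ∃ v, v ∈ e.1 ∧ v ∈ f.1
  · rw [if_pos hcom]
    obtain ⟨v, hv1, hv2⟩ := hcom
    let w : H.Walk (Sum.inr e) (Sum.inr f) :=
      .cons ((bs_adj_inr_inl v e).mpr hv1) (.cons ((bs_adj_inl_inr v f).mpr hv2) .nil)
    have h0 := dist_ne_zero_of hne' w
    have h1 : H.dist (Sum.inr e) (Sum.inr f) ≠ 1 := by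
      rw [Ne, SimpleGraph.dist_eq_one_iff_adj]; exact bs_not_adj_inr_inr e f
    have hle := SimpleGraph.dist_le w
    have hlen : w.length = 2 := by rfl
    omega
  · rw [if_neg hcom]
    obtain ⟨a, b, hab, habe⟩ := edge_decomp e
    obtain ⟨c, d, hcd, hcdf⟩ := edge_decomp f
    -- find u ∈ e, z ∈ f on opposite sides
    obtain ⟨u, hue, z, hzf, huz⟩ :
        ∃ u : V77, u ∈ e.1 ∧ ∃ z : V77, z ∈ f.1 ∧ ¬ (P u ↔ P z) := by
      have h1 : ¬ (P a ↔ P b) := ((adj_iff a b).1 hab).2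
      have h2 : ¬ (P c ↔ P d) := ((adj_iff c d).1 hcd).2
      by_cases hac : P a ↔ P c
      · exact ⟨a, by simp [habe], d, by simp [hcdf], by tauto⟩
      · exact ⟨a, by simp [habe], c, by simp [hcdf], hac⟩
    have hadj : G77.Adj u z := adj_of_opp huz
    set e1 : G77.edgeSet := ⟨s(u,z), hadj⟩
    let w : H.Walk (Sum.inr e) (Sum.inr f) :=
      .cons ((bs_adj_inr_inl u e).mpr hue)
        (.cons ((bs_adj_inl_inr u e1).mpr (by simp [e1]))
          (.cons ((bs_adj_inr_inl z e1).mpr (by simp [e1]))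
            (.cons ((bs_adj_inl_inr z f).mpr hzf) .nil)))
    have h0 := dist_ne_zero_of hne' w
    have h1' : H.dist (Sum.inr e) (Sum.inr f) ≠ 1 := by
      rw [Ne, SimpleGraph.dist_eq_one_iff_adj]; exact bs_not_adj_inr_inr e f
    have h2' : H.dist (Sum.inr e) (Sum.inr f) ≠ 2 := by
      refine dist_ne_two (fun z hz => ?_) h0
      rcases z with z | g
      · exact hcom ⟨z, (bs_adj_inr_inl z e).mp hz.1, (bs_adj_inl_inr z f).mp hz.2⟩
      · exact bs_not_adj_inr_inr e g hz.1
    have heven : Even (H.dist (Sum.inr e) (Sum.inr f)) := (dist_parity h0).mp rfl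
    have hle := SimpleGraph.dist_le w
    have hlen : w.length = 4 := by rfl
    rcases heven with ⟨k, hk⟩
    omega

/-- The combinatorial distance function. -/
def D : (V77 ⊕ G77.edgeSet) → (V77 ⊕ G77.edgeSet) → ℕ
  | Sum.inl u, Sum.inl v => if u = v then 0 else if G77.Adj u v then 2 else 4
  | Sum.inl v, Sum.inr e => if v ∈ e.1 then 1 else 3
  | Sum.inr e, Sum.inl v => if v ∈ e.1 then 1 else 3
  | Sum.inr e, Sum.inr f => if e = f then 0 else if ∃ v, v ∈ e.1 ∧ v ∈ f.1 then 2 else 4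

lemma dist_eq_D : ∀ x y : V77 ⊕ G77.edgeSet, H.dist x y = D x y
  | Sum.inl u, Sum.inl v => dist_inl_inl u v
  | Sum.inl v, Sum.inr e => dist_inl_inr v e
  | Sum.inr e, Sum.inl v => dist_inr_inl v e
  | Sum.inr e, Sum.inr f => dist_inr_inr e f

end ZD77

namespace ZD77
open Sum SimpleGraph

def vv (m : ℕ) (h : (m : ZMod 77) ≠ 0 ∧ ∃ b : ZMod 77, b ≠ 0 ∧ (m : ZMod 77) * b = 0) : V77 := ⟨m, h⟩

def ee (a b : ℕ)
    (ha : (a : ZMod 77) ≠ 0 ∧ ∃ x : ZMod 77, x ≠ 0 ∧ (a : ZMod 77) * x = 0)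
    (hb : (b : ZMod 77) ≠ 0 ∧ ∃ x : ZMod 77, x ≠ 0 ∧ (b : ZMod 77) * x = 0)
    (hadj : G77.Adj (vv a ha) (vv b hb)) : G77.edgeSet :=
  ⟨s(vv a ha, vv b hb), hadj⟩

def W0 : Finset (V77 ⊕ G77.edgeSet) :=
  { Sum.inr (ee 14 11 (by decide) (by decide) (by decide)),
    Sum.inr (ee 21 11 (by decide) (by decide) (by decide)),
    Sum.inr (ee 28 22 (by decide) (by decide) (by decide)),
    Sum.inr (ee 35 22 (by decide) (by decide) (by decide)),
    Sum.inr (ee 42 33 (by decide) (by decide) (by decide)),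
    Sum.inr (ee 49 33 (by decide) (by decide) (by decide)),
    Sum.inr (ee 56 44 (by decide) (by decide) (by decide)),
    Sum.inr (ee 63 44 (by decide) (by decide) (by decide)),
    Sum.inr (ee 70 55 (by decide) (by decide) (by decide)),
    Sum.inl (vv 66 (by decide)) }

set_option maxRecDepth 100000 in
lemma W0_card : W0.card = 10 := by decide

set_option maxRecDepth 1000000 in
set_option maxHeartbeats 8000000 in
lemma W0_resolves : ∀ x y : V77 ⊕ G77.edgeSet, x ≠ y → ∃ w ∈ W0, D x w ≠ D y w := by decide

end ZD77

namespace ZD77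
open Sum SimpleGraph Finset

abbrev Edg := G77.edgeSet

/-- edges of `We` through a vertex -/
def Sv (We : Finset Edg) (a : V77) : Finset Edg := We.filter (fun f => a ∈ f.1)

lemma Sv_subset (We : Finset Edg) (a : V77) : Sv We a ⊆ We := filter_subset _ _

lemma Sv_disjoint (We : Finset Edg) {a b : V77} (hne : a ≠ b) (hs : P a ↔ P b) :
    Disjoint (Sv We a) (Sv We b) := by
  rw [Finset.disjoint_left]
  intro f hfa hfb
  exact not_mem_same_side hne hs f ⟨(mem_filter.mp hfa).2, (mem_filter.mp hfb).2⟩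

lemma D_inl_inl_same {u v z : V77} (hs : P u ↔ P v) (hu : u ≠ z) (hv : v ≠ z) :
    D (Sum.inl u) (Sum.inl z) = D (Sum.inl v) (Sum.inl z) := by
  show (if u = z then 0 else if G77.Adj u z then 2 else 4)
     = (if v = z then 0 else if G77.Adj v z then 2 else 4)
  rw [if_neg hu, if_neg hv]
  by_cases h : G77.Adj u z
  · have h' : G77.Adj v z := adj_of_opp (by have := ((adj_iff u z).1 h).2; tauto)
    rw [if_pos h, if_pos h']
  · have h' : ¬ G77.Adj v z := by
      intro hc
      exact h (adj_of_opp (by have := ((adj_iff v z).1 hc).2; tauto))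
    rw [if_neg h, if_neg h']

section LB
variable (W : Finset (V77 ⊕ Edg))

/-- the "bad pair" lemma : two same-side vertices not in `W` and not covered by a `W`-edge
    cannot both occur. -/
lemma not_two_bad (hres : ∀ x y : V77 ⊕ Edg, x ≠ y → ∃ w ∈ W, D x w ≠ D y w)
    {u v : V77} (hs : P u ↔ P v) (hne : u ≠ v)
    (hu : Sum.inl u ∉ W) (hv : Sum.inl v ∉ W)
    (hSu : Sv W.toRight u = ∅) (hSv : Sv W.toRight v = ∅) : False := by
  obtain ⟨w, hw, hD⟩ := hres (Sum.inl u) (Sum.inl v) (by simp [hne])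
  rcases w with z | f
  · have hu' : u ≠ z := by rintro rfl; exact hu hw
    have hv' : v ≠ z := by rintro rfl; exact hv hw
    exact hD (D_inl_inl_same hs hu' hv')
  · have hf : f ∈ W.toRight := mem_toRight.mpr hw
    have h1 : u ∉ f.1 := fun h => by
      have : f ∈ Sv W.toRight u := mem_filter.mpr ⟨hf, h⟩
      simp [hSu] at this
    have h2 : v ∉ f.1 := fun h => by
      have : f ∈ Sv W.toRight v := mem_filter.mpr ⟨hf, h⟩
      simp [hSv] at this
    exact hD (by show (if u ∈ f.1 then 1 else 3) = (if v ∈ f.1 then 1 else 3);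
                 rw [if_neg h1, if_neg h2])

/-- the key "unresolved pair of edges" lemma -/
lemma quadruple (hres : ∀ x y : V77 ⊕ Edg, x ≠ y → ∃ w ∈ W, D x w ≠ D y w)
    (hWB : ∀ z : V77, Sum.inl z ∈ W → P z)
    {a a' b b' : V77} (hPa : P a) (hPa' : P a') (hPb : ¬ P b) (hPb' : ¬ P b')
    (haa : a ≠ a')
    (haW : Sum.inl a ∉ W) (haW' : Sum.inl a' ∉ W)
    (hab : ∀ f ∈ W.toRight, ¬ (a ∈ f.1 ∧ b ∈ f.1))
    (hab' : ∀ f ∈ W.toRight, ¬ (a' ∈ f.1 ∧ b' ∈ f.1))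
    (hU : Sv W.toRight a ∪ Sv W.toRight b = Sv W.toRight a' ∪ Sv W.toRight b') : False := by
  have hadj : G77.Adj a b := adj_of_opp (by tauto)
  have hadj' : G77.Adj a' b' := adj_of_opp (by tauto)
  set e : Edg := ⟨s(a, b), hadj⟩ with he
  set e' : Edg := ⟨s(a', b'), hadj'⟩ with he'
  have hee : e ≠ e' := by
    intro hc
    have : s(a,b) = s(a',b') := congrArg Subtype.val hc
    rw [Sym2.eq_iff] at this
    rcases this with ⟨h1, -⟩ | ⟨h1, -⟩
    · exact haa h1
    · rw [h1] at hPa; exact hPb' hPa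
  obtain ⟨w, hw, hD⟩ := hres (Sum.inr e) (Sum.inr e') (by simp [hee])
  rcases w with z | g
  · have hPz : P z := hWB z hw
    have hz1 : z ∉ e.1 := by
      rw [he, mem_sym2]
      rintro (rfl | rfl)
      · exact haW hw
      · exact hPb hPz
    have hz2 : z ∉ e'.1 := by
      rw [he', mem_sym2]
      rintro (rfl | rfl)
      · exact haW' hw
      · exact hPb' hPz
    exact hD (by show (if z ∈ e.1 then 1 else 3) = (if z ∈ e'.1 then 1 else 3);
                 rw [if_neg hz1, if_neg hz2])
  · have hg : g ∈ W.toRight := mem_toRight.mpr hw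
    have hge : e ≠ g := by
      rintro rfl
      exact hab e hg ⟨by simp [he, mem_sym2], by simp [he, mem_sym2]⟩
    have hge' : e' ≠ g := by
      rintro rfl
      exact hab' e' hg ⟨by simp [he', mem_sym2], by simp [he', mem_sym2]⟩
    have hcom : (∃ v, v ∈ e.1 ∧ v ∈ g.1) ↔ g ∈ Sv W.toRight a ∪ Sv W.toRight b := by
      constructor
      · rintro ⟨v, hv1, hv2⟩
        rw [he, mem_sym2] at hv1
        rcases hv1 with rfl | rfl
        · exact mem_union_left _ (mem_filter.mpr ⟨hg, hv2⟩)
        · exact mem_union_right _ (mem_filter.mpr ⟨hg, hv2⟩)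
      · intro h
        rcases mem_union.mp h with h | h
        · exact ⟨a, by rw [he, mem_sym2]; left; rfl, (mem_filter.mp h).2⟩
        · exact ⟨b, by rw [he, mem_sym2]; right; rfl, (mem_filter.mp h).2⟩
    have hcom' : (∃ v, v ∈ e'.1 ∧ v ∈ g.1) ↔ g ∈ Sv W.toRight a' ∪ Sv W.toRight b' := by
      constructor
      · rintro ⟨v, hv1, hv2⟩
        rw [he', mem_sym2] at hv1
        rcases hv1 with rfl | rfl
        · exact mem_union_left _ (mem_filter.mpr ⟨hg, hv2⟩)
        · exact mem_union_right _ (mem_filter.mpr ⟨hg, hv2⟩)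
      · intro h
        rcases mem_union.mp h with h | h
        · exact ⟨a', by rw [he', mem_sym2]; left; rfl, (mem_filter.mp h).2⟩
        · exact ⟨b', by rw [he', mem_sym2]; right; rfl, (mem_filter.mp h).2⟩
    apply hD
    show (if e = g then 0 else if ∃ v, v ∈ e.1 ∧ v ∈ g.1 then 2 else 4)
       = (if e' = g then 0 else if ∃ v, v ∈ e'.1 ∧ v ∈ g.1 then 2 else 4)
    rw [if_neg hge, if_neg hge']
    by_cases hc : ∃ v, v ∈ e.1 ∧ v ∈ g.1
    · have hc' : ∃ v, v ∈ e'.1 ∧ v ∈ g.1 := hcom'.mpr (hU ▸ hcom.mp hc)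
      rw [if_pos hc, if_pos hc']
    · have hc' : ¬ ∃ v, v ∈ e'.1 ∧ v ∈ g.1 := fun h => hc (hcom.mpr (hU ▸ hcom'.mp h))
      rw [if_neg hc, if_neg hc']

end LB
end ZD77

namespace ZD77
open Sum SimpleGraph Finset

def AF : Finset V77 := Finset.univ.filter P
def BF : Finset V77 := Finset.univ.filter (fun x => ¬ P x)

set_option maxRecDepth 40000 in
lemma AF_card : AF.card = 10 := by decide
set_option maxRecDepth 40000 in
lemma BF_card : BF.card = 6 := by decide

/-- generic one-side counting: in A-side (or B-side given by a predicate value) -/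
lemma lower_bound (W : Finset (V77 ⊕ Edg))
    (hres : ∀ x y : V77 ⊕ Edg, x ≠ y → ∃ w ∈ W, D x w ≠ D y w) :
    10 ≤ W.card := by
  by_contra hlt
  push_neg at hlt
  have hW9 : W.card ≤ 9 := by omega
  set We := W.toRight with hWe
  -- A side partition
  set inA := AF.filter (fun a => Sum.inl a ∈ W) with hinA
  set restA := AF.filter (fun a => ¬ Sum.inl a ∈ W) with hrestA
  set badA := restA.filter (fun a => Sv We a = ∅) with hbadA
  set covA := restA.filter (fun a => ¬ Sv We a = ∅) with hcovA
  have hsplitA : inA.card + restA.card = 10 := by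
    rw [hinA, hrestA, card_filter_add_card_filter_not, AF_card]
  have hsplitA2 : badA.card + covA.card = restA.card := by
    rw [hbadA, hcovA, card_filter_add_card_filter_not]
  -- members of AF satisfy P
  have hmemA : ∀ a ∈ AF, P a := fun a ha => (mem_filter.mp ha).2
  have hmemB : ∀ b ∈ BF, ¬ P b := fun b hb => (mem_filter.mp hb).2
  -- badA has at most one element
  have hbadA1 : badA.card ≤ 1 := by
    by_contra hc
    push_neg at hc
    obtain ⟨a, ha, b, hb, hab⟩ := one_lt_card.mp hc
    have ha' := mem_filter.mp ha; have ha'' := mem_filter.mp ha'.1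
    have hb' := mem_filter.mp hb; have hb'' := mem_filter.mp hb'.1
    exact not_two_bad W hres (iff_of_true (hmemA a ha''.1) (hmemA b hb''.1)) hab
      ha''.2 hb''.2 ha'.2 hb'.2
  -- covA is bounded by We.card
  have hdisjA : ∀ a ∈ covA, ∀ b ∈ covA, a ≠ b → Disjoint (Sv We a) (Sv We b) := by
    intro a ha b hb hab
    have ha'' := mem_filter.mp (mem_filter.mp ha).1
    have hb'' := mem_filter.mp (mem_filter.mp hb).1
    exact Sv_disjoint We hab (iff_of_true (hmemA a ha''.1) (hmemA b hb''.1))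
  have hbiUA : (covA.biUnion (Sv We)).card = ∑ a ∈ covA, (Sv We a).card :=
    card_biUnion hdisjA
  have hsubA : covA.biUnion (Sv We) ⊆ We := by
    intro f hf
    obtain ⟨a, -, hfa⟩ := mem_biUnion.mp hf
    exact Sv_subset We a hfa
  have hsumA_le : ∑ a ∈ covA, (Sv We a).card ≤ We.card := by
    rw [← hbiUA]; exact card_le_card hsubA
  have hcovA_le_sum : covA.card ≤ ∑ a ∈ covA, (Sv We a).card := by
    calc covA.card = ∑ _a ∈ covA, 1 := by simp
    _ ≤ ∑ a ∈ covA, (Sv We a).card := by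
        refine sum_le_sum (fun a ha => ?_)
        have := (mem_filter.mp ha).2
        have hne := nonempty_iff_ne_empty.mpr this
        exact card_pos.mpr hne
  have hcovA_le : covA.card ≤ We.card := le_trans hcovA_le_sum hsumA_le
  -- B side partition (analogous)
  set inB := BF.filter (fun b => Sum.inl b ∈ W) with hinB
  set restB := BF.filter (fun b => ¬ Sum.inl b ∈ W) with hrestB
  set badB := restB.filter (fun b => Sv We b = ∅) with hbadB
  set covB := restB.filter (fun b => ¬ Sv We b = ∅) with hcovB
  have hsplitB : inB.card + restB.card = 6 := by
    rw [hinB, hrestB, card_filter_add_card_filter_not, BF_card]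
  have hsplitB2 : badB.card + covB.card = restB.card := by
    rw [hbadB, hcovB, card_filter_add_card_filter_not]
  have hbadB1 : badB.card ≤ 1 := by
    by_contra hc
    push_neg at hc
    obtain ⟨a, ha, b, hb, hab⟩ := one_lt_card.mp hc
    have ha' := mem_filter.mp ha; have ha'' := mem_filter.mp ha'.1
    have hb' := mem_filter.mp hb; have hb'' := mem_filter.mp hb'.1
    exact not_two_bad W hres (iff_of_false (hmemB a ha''.1) (hmemB b hb''.1)) hab
      ha''.2 hb''.2 ha'.2 hb'.2
  have hdisjB : ∀ a ∈ covB, ∀ b ∈ covB, a ≠ b → Disjoint (Sv We a) (Sv We b) := by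
    intro a ha b hb hab
    have ha'' := mem_filter.mp (mem_filter.mp ha).1
    have hb'' := mem_filter.mp (mem_filter.mp hb).1
    exact Sv_disjoint We hab (iff_of_false (hmemB a ha''.1) (hmemB b hb''.1))
  have hbiUB : (covB.biUnion (Sv We)).card = ∑ a ∈ covB, (Sv We a).card :=
    card_biUnion hdisjB
  have hsubB : covB.biUnion (Sv We) ⊆ We := by
    intro f hf
    obtain ⟨a, -, hfa⟩ := mem_biUnion.mp hf
    exact Sv_subset We a hfa
  have hsumB_le : ∑ a ∈ covB, (Sv We a).card ≤ We.card := by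
    rw [← hbiUB]; exact card_le_card hsubB
  have hcovB_le_sum : covB.card ≤ ∑ a ∈ covB, (Sv We a).card := by
    calc covB.card = ∑ _a ∈ covB, 1 := by simp
    _ ≤ ∑ a ∈ covB, (Sv We a).card := by
        refine sum_le_sum (fun a ha => ?_)
        exact card_pos.mpr (nonempty_iff_ne_empty.mpr (mem_filter.mp ha).2)
  have hcovB_le : covB.card ≤ We.card := le_trans hcovB_le_sum hsumB_le
  -- total count
  have htot : W.toLeft.card + We.card = W.card := card_toLeft_add_card_toRight
  have hinAB : inA.card + inB.card = W.toLeft.card := by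
    have h1 : inA = W.toLeft.filter P := by
      rw [hinA]; ext a
      simp [AF, mem_toLeft, and_comm]
    have h2 : inB = W.toLeft.filter (fun x => ¬ P x) := by
      rw [hinB]; ext a
      simp [BF, mem_toLeft, and_comm]
    rw [h1, h2, card_filter_add_card_filter_not]
  -- arithmetic conclusions
  have hr9 : We.card ≤ 9 := by omega
  have hq0 : inB.card = 0 := by omega
  have hbadA_eq : badA.card = 1 := by omega
  have hcovA_eq : covA.card = We.card := by omega
  have hcovB5 : 5 ≤ covB.card := by omega
  -- every W-vertex is on the A side
  have hWB : ∀ z : V77, Sum.inl z ∈ W → P z := by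
    intro z hz
    by_contra hPz
    have : z ∈ inB := by
      rw [hinB]; exact mem_filter.mpr ⟨mem_filter.mpr ⟨mem_univ z, hPz⟩, hz⟩
    rw [card_eq_zero.mp hq0] at this
    simp at this
  -- each covered A vertex has a single W-edge, and these exhaust We
  have hsumA_eq : ∑ a ∈ covA, (Sv We a).card = We.card := le_antisymm hsumA_le (by omega)
  have hsingA : ∀ a ∈ covA, (Sv We a).card = 1 := by
    by_contra hc
    push_neg at hc
    obtain ⟨a, ha, hne1⟩ := hc
    have h2 : (1:ℕ) < (Sv We a).card := by
      have := card_pos.mpr (nonempty_iff_ne_empty.mpr (mem_filter.mp ha).2)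
      omega
    have : ∑ _a ∈ covA, (1:ℕ) < ∑ a ∈ covA, (Sv We a).card := by
      refine sum_lt_sum (fun b hb => ?_) ⟨a, ha, h2⟩
      exact card_pos.mpr (nonempty_iff_ne_empty.mpr (mem_filter.mp hb).2)
    simp only [sum_const, smul_eq_mul, mul_one] at this
    omega
  have hexh : covA.biUnion (Sv We) = We :=
    eq_of_subset_of_card_le hsubA (by rw [hbiUA, hsumA_eq])
  have hexh' : ∀ f ∈ We, ∃ a ∈ covA, f ∈ Sv We a := by
    intro f hf
    rw [← hexh] at hf
    exact mem_biUnion.mp hf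
  -- the unique uncovered A vertex
  obtain ⟨a₀, ha₀⟩ := card_eq_one.mp hbadA_eq
  have ha₀m : a₀ ∈ badA := ha₀ ▸ mem_singleton_self a₀
  have ha₀rest := mem_filter.mp ha₀m
  have ha₀A := mem_filter.mp ha₀rest.1
  have ha₀S : Sv We a₀ = ∅ := ha₀rest.2
  -- helper to produce a singleton Sv from membership in covA
  have hsingSv : ∀ a ∈ covA, ∀ f ∈ Sv We a, Sv We a = {f} := by
    intro a ha f hf
    obtain ⟨x, hx⟩ := card_eq_one.mp (hsingA a ha)
    rw [hx] at hf ⊢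
    rw [mem_singleton] at hf
    rw [hf]
  -- case split on badB
  rcases Nat.lt_or_ge badB.card 1 with hb0 | hb1'
  · -- Case II : every B vertex is covered
    have hbadB0 : badB.card = 0 := by omega
    have hcovB6 : covB.card = 6 := by omega
    -- at least two B vertices have singleton Sv
    set B1 := covB.filter (fun b => (Sv We b).card = 1) with hB1
    have hB1card : 2 ≤ B1.card := by
      by_contra hc
      push_neg at hc
      have hsub : B1 ⊆ covB := filter_subset _ _
      have hrest : 5 ≤ (covB \ B1).card := by
        rw [card_sdiff_of_subset hsub]; omega
      have hsum2 : (covB \ B1).card * 2 ≤ ∑ b ∈ covB \ B1, (Sv We b).card := by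
        rw [← smul_eq_mul]
        refine card_nsmul_le_sum _ _ _ (fun b hb => ?_)
        have hb' := mem_sdiff.mp hb
        have h1 : (Sv We b).card ≠ 1 := by
          intro h
          exact hb'.2 (mem_filter.mpr ⟨hb'.1, h⟩)
        have h0 := card_pos.mpr (nonempty_iff_ne_empty.mpr (mem_filter.mp hb'.1).2)
        omega
      have hmono : ∑ b ∈ covB \ B1, (Sv We b).card ≤ ∑ b ∈ covB, (Sv We b).card :=
        sum_le_sum_of_subset (sdiff_subset)
      omega
    obtain ⟨b, hb, b', hb', hbb⟩ := one_lt_card.mp (by omega : 1 < B1.card)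
    have hbcov : b ∈ covB := (mem_filter.mp hb).1
    have hbcov' : b' ∈ covB := (mem_filter.mp hb').1
    obtain ⟨g, hg⟩ := card_eq_one.mp (mem_filter.mp hb).2
    obtain ⟨f, hf⟩ := card_eq_one.mp (mem_filter.mp hb').2
    have hgWe : g ∈ We := Sv_subset We b (hg ▸ mem_singleton_self g)
    have hfWe : f ∈ We := Sv_subset We b' (hf ▸ mem_singleton_self f)
    have hPb : ¬ P b := hmemB b (mem_filter.mp (mem_filter.mp hbcov).1).1
    have hPb' : ¬ P b' := hmemB b' (mem_filter.mp (mem_filter.mp hbcov').1).1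
    have hfg : g ≠ f := by
      intro hcontra
      have hdis := Sv_disjoint We hbb (iff_of_false hPb hPb')
      rw [hg, hf] at hdis
      exact (Finset.disjoint_left.mp hdis (mem_singleton_self g))
        (mem_singleton.mpr hcontra)
    obtain ⟨c, hc, hgc⟩ := hexh' g hgWe
    obtain ⟨c', hc', hfc'⟩ := hexh' f hfWe
    have hSc : Sv We c = {g} := hsingSv c hc g hgc
    have hSc' : Sv We c' = {f} := hsingSv c' hc' f hfc'
    have hcc : c' ≠ c := by
      intro hcontra
      have : ({g} : Finset Edg) = {f} := by rw [← hSc, ← hcontra, hSc']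
      exact hfg (Finset.singleton_injective this)
    have hPc : P c := hmemA c (mem_filter.mp (mem_filter.mp hc).1).1
    have hPc' : P c' := hmemA c' (mem_filter.mp (mem_filter.mp hc').1).1
    refine quadruple W hres hWB hPc' hPc hPb hPb' hcc
      (mem_filter.mp (mem_filter.mp hc').1).2 (mem_filter.mp (mem_filter.mp hc).1).2
      (fun f' hf' hmem => ?_) (fun f' hf' hmem => ?_) ?_
    · -- no edge through c' and b
      have h1 : f' ∈ Sv We c' := mem_filter.mpr ⟨hf', hmem.1⟩
      have h2 : f' ∈ Sv We b := mem_filter.mpr ⟨hf', hmem.2⟩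
      rw [hSc', mem_singleton] at h1
      rw [hg, mem_singleton] at h2
      exact hfg (h2.symm.trans h1)
    · have h1 : f' ∈ Sv We c := mem_filter.mpr ⟨hf', hmem.1⟩
      have h2 : f' ∈ Sv We b' := mem_filter.mpr ⟨hf', hmem.2⟩
      rw [hSc, mem_singleton] at h1
      rw [hf, mem_singleton] at h2
      exact hfg (h1.symm.trans h2)
    · rw [hSc', hSc, hg, hf, union_comm]
  · -- Case I : some B vertex is uncovered
    have hbadB_eq : badB.card = 1 := by omega
    have hcovB_eq : covB.card = 5 := by omega
    obtain ⟨b₀, hb₀⟩ := card_eq_one.mp hbadB_eq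
    have hb₀m : b₀ ∈ badB := hb₀ ▸ mem_singleton_self b₀
    have hb₀rest := mem_filter.mp hb₀m
    have hb₀B := mem_filter.mp hb₀rest.1
    have hb₀S : Sv We b₀ = ∅ := hb₀rest.2
    -- some covered B vertex has a singleton Sv
    have hex1 : ∃ b₁ ∈ covB, (Sv We b₁).card = 1 := by
      by_contra hc
      push_neg at hc
      have hsum2 : covB.card * 2 ≤ ∑ b ∈ covB, (Sv We b).card := by
        rw [← smul_eq_mul]
        refine card_nsmul_le_sum _ _ _ (fun b hb => ?_)
        have h1 := hc b hb
        have h0 := card_pos.mpr (nonempty_iff_ne_empty.mpr (mem_filter.mp hb).2)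
        omega
      omega
    obtain ⟨b₁, hb₁, hb₁card⟩ := hex1
    obtain ⟨f, hf⟩ := card_eq_one.mp hb₁card
    have hfWe : f ∈ We := Sv_subset We b₁ (hf ▸ mem_singleton_self f)
    obtain ⟨c, hc, hfc⟩ := hexh' f hfWe
    have hSc : Sv We c = {f} := hsingSv c hc f hfc
    have hPa₀ : P a₀ := hmemA a₀ ha₀A.1
    have hPc : P c := hmemA c (mem_filter.mp (mem_filter.mp hc).1).1
    have hPb₁ : ¬ P b₁ := hmemB b₁ (mem_filter.mp (mem_filter.mp hb₁).1).1
    have hPb₀ : ¬ P b₀ := hmemB b₀ hb₀B.1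
    have ha₀c : a₀ ≠ c := by
      intro hcontra
      rw [← hcontra, ha₀S] at hSc
      exact (singleton_ne_empty f) hSc.symm
    refine quadruple W hres hWB hPa₀ hPc hPb₁ hPb₀ ha₀c
      ha₀A.2 (mem_filter.mp (mem_filter.mp hc).1).2
      (fun f' hf' hmem => ?_) (fun f' hf' hmem => ?_) ?_
    · have h1 : f' ∈ Sv We a₀ := mem_filter.mpr ⟨hf', hmem.1⟩
      rw [ha₀S] at h1; simp at h1
    · have h2 : f' ∈ Sv We b₀ := mem_filter.mpr ⟨hf', hmem.2⟩
      rw [hb₀S] at h2; simp at h2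
    · rw [ha₀S, hb₀S, hf, hSc]
      simp
end ZD77

theorem stmt16 : metricDim (BS (zdGraph 77)) = 10 := by
  have hmem : 10 ∈ {k | ∃ W : Finset (ZDVert 77 ⊕ (zdGraph 77).edgeSet),
      IsResolving (BS (zdGraph 77)) ↑W ∧ W.card = k} := by
    refine ⟨ZD77.W0, ?_, ZD77.W0_card⟩
    intro x y hxy
    obtain ⟨w, hw, hD⟩ := ZD77.W0_resolves x y hxy
    exact ⟨w, Finset.mem_coe.mpr hw,
      by rw [ZD77.dist_eq_D x w, ZD77.dist_eq_D y w]; exact hD⟩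
  have hlb : ∀ k ∈ {k | ∃ W : Finset (ZDVert 77 ⊕ (zdGraph 77).edgeSet),
      IsResolving (BS (zdGraph 77)) ↑W ∧ W.card = k}, 10 ≤ k := by
    rintro k ⟨W, hres, rfl⟩
    refine ZD77.lower_bound W ?_
    intro x y hxy
    obtain ⟨w, hw, hd⟩ := hres x y hxy
    refine ⟨w, Finset.mem_coe.mp hw, ?_⟩
    rw [← ZD77.dist_eq_D x w, ← ZD77.dist_eq_D y w]
    exact hd
  refine le_antisymm (Nat.sInf_le hmem) ?_
  exact hlb _ (Nat.sInf_mem ⟨10, hmem⟩)
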